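/- Let q>2 be real and set a(x) = ((q−1)e^x − e^{2x})/(e^x+q−1)³ for x≥0. Let r>2, let φ∈C²([0,∞)) be nonnegative, and assume that w↦w·φ'(w) is nonnegative and nondecreasing on [0,∞) with w·φ'(w)→∞ as w→∞. Define Φ(t) = ∫_{0}^{∞} x^r · e^{−φ(x/t)} · a(x) dx for t>0. Then there is exactly one t_0∈(0,∞) such that Φ(t_0)=0. -/

import Mathlib

open MeasureTheory Filter Topology Set

noncomputable def afun (q : ℝ) (x : ℝ) : ℝ :=
  ((q - 1) * Real.exp x - Real.exp (2 * x)) / (Real.exp x + q - 1) ^ 3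

/-!
As `t → ∞`, `Φ(t)` tends to `e^{-φ(0)} ∫ x^r a(x) dx`, which is negative: with
`f = 1/(e^x + q - 1)` one has `a = -f''`, so integrating by parts twice gives
`∫ x^r a = -r(r-1) ∫ x^{r-2} f < 0`. As `t → 0⁺`, the substitution `x = t w` gives
`Φ(t) = t^{r+1} ∫ w^r e^{-φ(w)} a(t w) dw` with limit `a(0) ∫ w^r e^{-φ(w)} dw > 0`
(the weight is integrable because `w φ'(w) → ∞`). So `Φ` has a zero.

For `t₁ < t₂` the integrands differ by the factor `e^{h(x)}`, `h(x) = φ(x/t₁) - φ(x/t₂)`,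
and `x h'(x) = ψ(x/t₁) - ψ(x/t₂) ≥ 0` for `ψ(w) = w φ'(w)`; since `ψ → ∞`, `h` also increases
strictly somewhere beyond `x₀ = log(q-1)`. As `a ≥ 0` on `[0, x₀]` and `a < 0` after,
`Φ(t₂) < e^{h(x₀)} Φ(t₁)`: once `Φ` is `≤ 0` it stays negative, so the zero is unique.
-/

open Real

section afun

variable {q : ℝ}

lemma afun_eq (q x : ℝ) : afun q x = exp x * (q - 1 - exp x) / (exp x + q - 1) ^ 3 := by
  rw [afun, two_mul, exp_add]
  ring

lemma exp_add_sub_one_pos (hq : 1 ≤ q) (x : ℝ) : 0 < exp x + q - 1 := by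
  linarith [exp_pos x]

lemma continuous_afun (hq : 1 ≤ q) : Continuous (afun q) :=
  Continuous.div (by fun_prop) (by fun_prop) fun x => pow_ne_zero 3 (exp_add_sub_one_pos hq x).ne'

lemma inv_exp_add_sub_one_le (hq : 1 ≤ q) (x : ℝ) : (exp x + q - 1)⁻¹ ≤ exp (-x) := by
  rw [exp_neg]
  exact inv_anti₀ (exp_pos x) (by linarith)

lemma exp_div_exp_add_sub_one_sq_le (hq : 1 ≤ q) (x : ℝ) :
    exp x / (exp x + q - 1) ^ 2 ≤ exp (-x) := by
  calc exp x / (exp x + q - 1) ^ 2 ≤ exp x / exp x ^ 2 := by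
        gcongr
        linarith
    _ = exp (-x) := by
        rw [exp_neg]
        field_simp

lemma abs_afun_le (hq : 1 ≤ q) (x : ℝ) : |afun q x| ≤ exp (-x) := by
  have hD := exp_add_sub_one_pos hq x
  have he := exp_pos x
  have hnum : |q - 1 - exp x| ≤ exp x + q - 1 :=
    abs_sub_le_of_nonneg_of_le (by linarith) (by linarith) he.le (by linarith)
  calc |afun q x| = exp x * |q - 1 - exp x| / (exp x + q - 1) ^ 3 := by
        rw [afun_eq, abs_div, abs_mul, abs_of_pos he, abs_of_pos (pow_pos hD 3)]
    _ ≤ exp x * (exp x + q - 1) / (exp x + q - 1) ^ 3 := by gcongr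
    _ = exp x / (exp x + q - 1) ^ 2 := by field_simp
    _ ≤ exp (-x) := exp_div_exp_add_sub_one_sq_le hq x

lemma afun_pos {x : ℝ} (hx : exp x < q - 1) : 0 < afun q x := by
  have := exp_pos x
  rw [afun_eq]
  exact div_pos (mul_pos this (by linarith)) (pow_pos (by linarith) 3)

lemma afun_nonneg {x : ℝ} (hx : exp x ≤ q - 1) : 0 ≤ afun q x := by
  have := exp_pos x
  rw [afun_eq]
  exact div_nonneg (mul_nonneg this.le (by linarith)) (pow_nonneg (by linarith) 3)

lemma afun_neg (hq : 1 ≤ q) {x : ℝ} (hx : q - 1 < exp x) : afun q x < 0 := by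
  rw [afun_eq]
  exact div_neg_of_neg_of_pos (mul_neg_of_pos_of_neg (exp_pos x) (by linarith))
    (pow_pos (exp_add_sub_one_pos hq x) 3)

lemma hasDerivAt_inv_exp_add_sub_one (hq : 1 ≤ q) (x : ℝ) :
    HasDerivAt (fun y => (exp y + q - 1)⁻¹) (-(exp x / (exp x + q - 1) ^ 2)) x := by
  refine ((((hasDerivAt_exp x).add_const q).sub_const 1).inv
    (exp_add_sub_one_pos hq x).ne').congr_deriv ?_
  ring

lemma hasDerivAt_exp_div_exp_add_sub_one_sq (hq : 1 ≤ q) (x : ℝ) :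
    HasDerivAt (fun y => exp y / (exp y + q - 1) ^ 2) (afun q x) x := by
  have hD := (exp_add_sub_one_pos hq x).ne'
  refine ((hasDerivAt_exp x).div ((((hasDerivAt_exp x).add_const q).sub_const 1).fun_pow 2)
    (pow_ne_zero 2 hD)).congr_deriv ?_
  rw [afun_eq]
  field_simp
  ring

end afun

lemma integrableOn_rpow_mul_exp_neg {s : ℝ} (hs : -1 < s) :
    IntegrableOn (fun x : ℝ => x ^ s * exp (-x)) (Ioi 0) := by
  simpa only [rpow_one] using integrableOn_rpow_mul_exp_neg_rpow hs one_pos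

lemma integrableOn_Ioi_of_norm_le_rpow_mul_exp_neg {g : ℝ → ℝ} {s : ℝ} (hs : -1 < s)
    (hg : ContinuousOn g (Ioi 0)) (hbound : ∀ x ∈ Ioi (0 : ℝ), ‖g x‖ ≤ x ^ s * exp (-x)) :
    IntegrableOn g (Ioi 0) :=
  (integrableOn_rpow_mul_exp_neg hs).mono' (hg.aestronglyMeasurable measurableSet_Ioi)
    ((ae_restrict_iff' measurableSet_Ioi).mpr (.of_forall hbound))

lemma setIntegral_Ioi_pos {f : ℝ → ℝ} {a b : ℝ} (hf : IntegrableOn f (Ioi a)) (hab : a ≤ b)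
    (hnonneg : ∀ x ∈ Ioi a, 0 ≤ f x) (hpos : ∀ x ∈ Ioi b, 0 < f x) :
    0 < ∫ x in Ioi a, f x := by
  rw [setIntegral_pos_iff_support_of_nonneg_ae
    ((ae_restrict_iff' measurableSet_Ioi).mpr (.of_forall hnonneg)) hf]
  have hsub : Ioi b ⊆ Function.support f ∩ Ioi a :=
    fun x hx => ⟨(hpos x hx).ne', lt_of_le_of_lt hab hx⟩
  exact (measure_mono hsub).trans_lt' (by simp)

lemma integral_mul_lt_mul_integral {g k : ℝ → ℝ} {x₀ X : ℝ} (hx₀ : 0 < x₀) (hX : x₀ < X)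
    (hg : IntegrableOn g (Ioi 0)) (hkg : IntegrableOn (fun x => k x * g x) (Ioi 0))
    (hk : MonotoneOn k (Ioi 0)) (hkX : k x₀ < k X)
    (hg_nonneg : ∀ x ∈ Ioc 0 x₀, 0 ≤ g x) (hg_neg : ∀ x, x₀ < x → g x < 0) :
    ∫ x in Ioi 0, k x * g x < k x₀ * ∫ x in Ioi 0, g x := by
  have hX₀ : 0 < X := hx₀.trans hX
  have hnonneg : ∀ x ∈ Ioi (0 : ℝ), 0 ≤ k x₀ * g x - k x * g x := by
    intro x hx
    rw [← sub_mul]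
    rcases le_or_gt x x₀ with hle | hlt
    · exact mul_nonneg (sub_nonneg.2 (hk hx hx₀ hle)) (hg_nonneg x ⟨hx, hle⟩)
    · exact mul_nonneg_of_nonpos_of_nonpos (sub_nonpos.2 (hk hx₀ hx hlt.le)) (hg_neg x hlt).le
  have hpos : ∀ x ∈ Ioi X, 0 < k x₀ * g x - k x * g x := by
    intro x (hx : X < x)
    rw [← sub_mul]
    exact mul_pos_of_neg_of_neg (sub_neg.2 (hkX.trans_le (hk hX₀ (hX₀.trans hx) hx.le)))
      (hg_neg x (hX.trans hx))
  have := setIntegral_Ioi_pos (f := fun x => k x₀ * g x - k x * g x)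
    ((hg.const_mul (k x₀)).sub hkg) hX₀.le hnonneg hpos
  rw [integral_sub (hg.const_mul (k x₀)) hkg, integral_const_mul] at this
  linarith

lemma existsUnique_pos_eq_zero_of_crossing {F : ℝ → ℝ} (hF : ContinuousOn F (Ioi 0)) {a : ℝ}
    (ha : 0 < a) (hFa : 0 < F a) (hF_top : ∀ᶠ t in atTop, F t < 0)
    (hcross : ∀ t₁ t₂, 0 < t₁ → t₁ < t₂ → F t₁ ≤ 0 → F t₂ < 0) :
    ∃! t, 0 < t ∧ F t = 0 := by
  obtain ⟨b, hFb, hab⟩ := (hF_top.and (eventually_gt_atTop a)).exists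
  obtain ⟨t, ht, hFt⟩ := intermediate_value_Icc' hab.le (hF.mono fun x hx => ha.trans_le hx.1)
    ⟨hFb.le, hFa.le⟩
  have ht₀ : 0 < t := ha.trans_le ht.1
  refine ⟨t, ⟨ht₀, hFt⟩, fun s ⟨hs, hFs⟩ => ?_⟩
  by_contra hne
  rcases lt_or_gt_of_ne hne with hst | hts
  · exact (hcross s t hs hst hFs.le).ne hFt
  · exact (hcross t s ht₀ hts hFt.le).ne hFs

-- The boundary term of integrating `x^r a = x^r u'` by parts twice, where
-- `u = e^x / (e^x + q - 1)² = -f'` and `f = (e^x + q - 1)⁻¹`.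
noncomputable def afunAntideriv (q r x : ℝ) : ℝ :=
  x ^ r * (exp x / (exp x + q - 1) ^ 2) + r * x ^ (r - 1) * (exp x + q - 1)⁻¹

section afunAntideriv

variable {q r : ℝ}

lemma hasDerivAt_afunAntideriv (hq : 1 ≤ q) {x : ℝ} (hx : 0 < x) :
    HasDerivAt (afunAntideriv q r)
      (x ^ r * afun q x + r * (r - 1) * (x ^ (r - 2) * (exp x + q - 1)⁻¹)) x := by
  have h1 := hasDerivAt_rpow_const (p := r - 1) (Or.inl hx.ne')
  refine (((hasDerivAt_rpow_const (p := r) (Or.inl hx.ne')).mul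
    (hasDerivAt_exp_div_exp_add_sub_one_sq hq x)).add
    ((h1.const_mul r).mul (hasDerivAt_inv_exp_add_sub_one hq x))).congr_deriv ?_
  rw [show r - 1 - 1 = r - 2 by ring]
  ring

lemma afunAntideriv_zero (hr : 1 < r) : afunAntideriv q r 0 = 0 := by
  simp [afunAntideriv, zero_rpow (by linarith : r ≠ 0), zero_rpow (by linarith : r - 1 ≠ 0)]

lemma continuousAt_afunAntideriv_zero (hq : 1 ≤ q) (hr : 1 < r) :
    ContinuousAt (afunAntideriv q r) 0 := by
  have hD (x : ℝ) := (exp_add_sub_one_pos hq x).ne'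
  refine ContinuousAt.add ?_ ?_
  · exact (continuousAt_rpow_const 0 r (Or.inr (by linarith))).mul
      (Continuous.div (by fun_prop) (by fun_prop) fun x => pow_ne_zero 2 (hD x)).continuousAt
  · exact (continuousAt_const.mul (continuousAt_rpow_const 0 (r - 1) (Or.inr (by linarith)))).mul
      (Continuous.inv₀ (by fun_prop) hD).continuousAt

lemma tendsto_afunAntideriv_atTop (hq : 1 ≤ q) (hr : 0 ≤ r) :
    Tendsto (afunAntideriv q r) atTop (𝓝 0) := by
  have hdecay (s : ℝ) : Tendsto (fun x : ℝ => x ^ s * exp (-x)) atTop (𝓝 0) := by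
    simpa using tendsto_rpow_mul_exp_neg_mul_atTop_nhds_zero s 1 one_pos
  have hbound : ∀ᶠ x in atTop,
      ‖afunAntideriv q r x‖ ≤ x ^ r * exp (-x) + r * x ^ (r - 1) * exp (-x) := by
    filter_upwards [eventually_gt_atTop 0] with x hx
    have := exp_add_sub_one_pos hq x
    rw [afunAntideriv, norm_of_nonneg (by positivity)]
    gcongr
    · exact exp_div_exp_add_sub_one_sq_le hq x
    · exact inv_exp_add_sub_one_le hq x
  have hlim := (hdecay r).add ((hdecay (r - 1)).const_mul r)
  simp only [mul_zero, add_zero, ← mul_assoc] at hlim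
  exact squeeze_zero_norm' hbound hlim

lemma integral_rpow_mul_afun_neg (hq : 1 ≤ q) (hr : 1 < r) :
    ∫ x in Ioi 0, x ^ r * afun q x < 0 := by
  have hint_a : IntegrableOn (fun x => x ^ r * afun q x) (Ioi 0) := by
    refine integrableOn_Ioi_of_norm_le_rpow_mul_exp_neg (by linarith) ?_ fun x hx => ?_
    · exact (continuousOn_id.rpow_const fun x hx => Or.inl (ne_of_gt hx)).mul
        (continuous_afun hq).continuousOn
    · rw [norm_mul, norm_of_nonneg (rpow_nonneg (le_of_lt hx) r), norm_eq_abs]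
      exact mul_le_mul_of_nonneg_left (abs_afun_le hq x) (rpow_nonneg (le_of_lt hx) r)
  have hint_f : IntegrableOn (fun x => x ^ (r - 2) * (exp x + q - 1)⁻¹) (Ioi 0) := by
    refine integrableOn_Ioi_of_norm_le_rpow_mul_exp_neg (s := r - 2) (by linarith) ?_ fun x hx => ?_
    · exact (continuousOn_id.rpow_const fun x hx => Or.inl (ne_of_gt hx)).mul
        (Continuous.inv₀ (by fun_prop) fun x => (exp_add_sub_one_pos hq x).ne').continuousOn
    · rw [norm_mul, norm_of_nonneg (rpow_nonneg (le_of_lt hx) _),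
        norm_of_nonneg (inv_pos.2 (exp_add_sub_one_pos hq x)).le]
      exact mul_le_mul_of_nonneg_left (inv_exp_add_sub_one_le hq x) (rpow_nonneg (le_of_lt hx) _)
  have hFTC := integral_Ioi_of_hasDerivAt_of_tendsto
    (continuousAt_afunAntideriv_zero hq hr).continuousWithinAt
    (fun x hx => hasDerivAt_afunAntideriv hq hx) (hint_a.add (hint_f.const_mul _))
    (tendsto_afunAntideriv_atTop hq (by linarith))
  rw [integral_add hint_a (hint_f.const_mul _), integral_const_mul, afunAntideriv_zero hr,
    sub_zero] at hFTC
  have hpos : 0 < ∫ x in Ioi 0, x ^ (r - 2) * (exp x + q - 1)⁻¹ := by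
    have hpos (x : ℝ) (hx : x ∈ Ioi 0) : 0 < x ^ (r - 2) * (exp x + q - 1)⁻¹ :=
      mul_pos (rpow_pos_of_pos hx _) (inv_pos.2 (exp_add_sub_one_pos hq x))
    exact setIntegral_Ioi_pos hint_f le_rfl (fun x hx => (hpos x hx).le) hpos
  have hr' : 0 < r * (r - 1) := by nlinarith
  nlinarith [mul_pos hr' hpos]

end afunAntideriv

section potential

variable {φ φ' : ℝ → ℝ} {t₁ t₂ : ℝ}

lemma mul_log_sub_le_sub {A B c : ℝ} (hA : 0 < A) (hAB : A ≤ B)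
    (hφ : ∀ u ∈ Icc A B, HasDerivAt φ (φ' u) u) (hc : ∀ u ∈ Icc A B, c ≤ u * φ' u) :
    c * (log B - log A) ≤ φ B - φ A := by
  have hpos : ∀ u ∈ Icc A B, 0 < u := fun u hu => hA.trans_le hu.1
  have hmono : MonotoneOn (fun u => φ u - c * log u) (Icc A B) := by
    refine monotoneOn_of_hasDerivWithinAt_nonneg (f' := fun u => φ' u - c * u⁻¹) (convex_Icc A B)
      (fun u hu => ?_) (fun u hu => ?_) (fun u hu => ?_)
    · exact ((hφ u hu).continuousAt.sub
        ((continuousAt_log (hpos u hu).ne').const_mul c)).continuousWithinAt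
    · have hu' := interior_subset hu
      exact ((hφ u hu').sub ((hasDerivAt_log (hpos u hu').ne').const_mul c)).hasDerivWithinAt
    · have hu' := interior_subset hu
      rw [sub_nonneg, ← div_eq_mul_inv, div_le_iff₀ (hpos u hu'), mul_comm]
      exact hc u hu'
  have := hmono (left_mem_Icc.2 hAB) (right_mem_Icc.2 hAB) hAB
  simp only at this
  linarith

lemma sub_le_mul_log_sub {A B c : ℝ} (hA : 0 < A) (hAB : A ≤ B)
    (hφ : ∀ u ∈ Icc A B, HasDerivAt φ (φ' u) u) (hc : ∀ u ∈ Icc A B, u * φ' u ≤ c) :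
    φ B - φ A ≤ c * (log B - log A) := by
  have := mul_log_sub_le_sub (φ := -φ) (φ' := -φ') (c := -c) hA hAB (fun u hu => (hφ u hu).neg)
    fun u hu => by simpa using hc u hu
  simp only [Pi.neg_apply] at this
  linarith

lemma integrableOn_rpow_mul_exp_neg_of_tendsto {r : ℝ} (hr : -1 < r)
    (hφnn : ∀ w ∈ Ioi (0 : ℝ), 0 ≤ φ w) (hφ : ∀ u ∈ Ioi (0 : ℝ), HasDerivAt φ (φ' u) u)
    (hψ : Tendsto (fun w => w * φ' w) atTop atTop) :
    IntegrableOn (fun w => w ^ r * exp (-φ w)) (Ioi 0) := by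
  obtain ⟨M₀, hM₀⟩ := (hψ.eventually_ge_atTop (r + 2)).exists_forall_of_atTop
  set M := max M₀ 1
  have hM : 0 < M := zero_lt_one.trans_le (le_max_right _ _)
  have hcont : ContinuousOn (fun w => w ^ r * exp (-φ w)) (Ioi 0) :=
    (continuousOn_id.rpow_const fun w hw => Or.inl (ne_of_gt hw)).mul
      (continuousOn_of_forall_continuousAt fun w hw => (hφ w hw).continuousAt).neg.rexp
  rw [← Ioc_union_Ioi_eq_Ioi hM.le, integrableOn_union]
  constructor
  · refine Integrable.mono' (g := fun w => w ^ r)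
      ((intervalIntegrable_iff_integrableOn_Ioc_of_le hM.le).mp
        (intervalIntegral.intervalIntegrable_rpow' hr))
      ((hcont.mono Ioc_subset_Ioi_self).aestronglyMeasurable measurableSet_Ioc)
      ((ae_restrict_iff' measurableSet_Ioc).mpr (.of_forall fun w hw => ?_))
    have hw0 := rpow_nonneg hw.1.le r
    rw [norm_of_nonneg (by positivity)]
    exact mul_le_of_le_one_right hw0 (exp_le_one_iff.2 (neg_nonpos.2 (hφnn w hw.1)))
  · -- `ψ ≥ r + 2` beyond `M` makes `e^{-φ(w)}` decay like `w^{-(r+2)}`.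
    refine Integrable.mono' (g := fun w => exp (-φ M) * M ^ (r + 2) * w ^ (-2 : ℝ))
      ((integrableOn_Ioi_rpow_of_lt (by norm_num) hM).const_mul _)
      ((hcont.mono (Ioi_subset_Ioi hM.le)).aestronglyMeasurable measurableSet_Ioi)
      ((ae_restrict_iff' measurableSet_Ioi).mpr (.of_forall fun w hw => ?_))
    have hw0 : 0 < w := hM.trans hw
    have hlog := mul_log_sub_le_sub hM hw.le (fun u hu => hφ u (hM.trans_le hu.1))
      fun u hu => hM₀ u ((le_max_left _ _).trans hu.1)
    rw [norm_of_nonneg (by positivity)]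
    calc w ^ r * exp (-φ w) = exp (log w * r - φ w) := by
          rw [rpow_def_of_pos hw0, ← exp_add, sub_eq_add_neg]
      _ ≤ exp (-φ M + log M * (r + 2) + log w * (-2)) := exp_le_exp.2 (by linarith)
      _ = exp (-φ M) * M ^ (r + 2) * w ^ (-2 : ℝ) := by
          rw [rpow_def_of_pos hM, rpow_def_of_pos hw0, ← exp_add, ← exp_add]

lemma monotoneOn_sub_comp_div (hφd : DifferentiableOn ℝ φ (Ioi 0))
    (hψ : MonotoneOn (fun w => w * deriv φ w) (Ioi 0)) (ht₁ : 0 < t₁) (h12 : t₁ ≤ t₂) :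
    MonotoneOn (fun x => φ (x / t₁) - φ (x / t₂)) (Ioi 0) := by
  have ht₂ := ht₁.trans_le h12
  have hderiv {t x : ℝ} (ht : 0 < t) (hx : 0 < x) :
      HasDerivAt (fun x => φ (x / t)) (deriv φ (x / t) / t) x := by
    simpa only [Function.comp_def, id_eq, div_eq_mul_inv, one_mul] using
      (hφd.differentiableAt (Ioi_mem_nhds (div_pos hx ht))).hasDerivAt.comp x
        ((hasDerivAt_id x).div_const t)
  refine monotoneOn_of_hasDerivWithinAt_nonneg (convex_Ioi 0)
    (f' := fun x => deriv φ (x / t₁) / t₁ - deriv φ (x / t₂) / t₂)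
    (fun x hx => ((hderiv ht₁ hx).continuousAt.sub (hderiv ht₂ hx).continuousAt).continuousWithinAt)
    (fun x hx => ?_) (fun x hx => ?_) <;> rw [interior_Ioi] at hx
  · exact ((hderiv ht₁ hx).sub (hderiv ht₂ hx)).hasDerivWithinAt
  · have hψx := hψ (div_pos hx ht₂) (div_pos hx ht₁)
      (div_le_div_of_nonneg_left (le_of_lt hx) ht₁ h12)
    have hscale (t : ℝ) : x / t * deriv φ (x / t) = x * (deriv φ (x / t) / t) := by ring
    simp only [hscale] at hψx
    exact sub_nonneg.2 (le_of_mul_le_mul_left hψx hx)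

-- Each difference is `∫ ψ d(log w)` over an interval of log-length `log t₂ - log t₁`;
-- `ψ ≤ c` on the first by monotonicity, and `ψ ≥ c + 1` on the second since `ψ → ∞`.
lemma exists_sub_comp_div_lt (hφd : DifferentiableOn ℝ φ (Ioi 0))
    (hψ : MonotoneOn (fun w => w * deriv φ w) (Ioi 0))
    (hψtop : Tendsto (fun w => w * deriv φ w) atTop atTop) (ht₁ : 0 < t₁) (h12 : t₁ < t₂)
    {x₀ : ℝ} (hx₀ : 0 < x₀) :
    ∃ X, x₀ < X ∧ φ (x₀ / t₁) - φ (x₀ / t₂) < φ (X / t₁) - φ (X / t₂) := by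
  have ht₂ := ht₁.trans h12
  have hφ' : ∀ u ∈ Ioi (0 : ℝ), HasDerivAt φ (deriv φ u) u :=
    fun u hu => (hφd.differentiableAt (Ioi_mem_nhds hu)).hasDerivAt
  set c := x₀ / t₁ * deriv φ (x₀ / t₁)
  obtain ⟨W, hW⟩ := (hψtop.eventually_ge_atTop (c + 1)).exists_forall_of_atTop
  set X := max (x₀ + 1) (t₂ * W)
  have hxX : x₀ < X := (lt_add_one x₀).trans_le (le_max_left _ _)
  have hX : 0 < X := hx₀.trans hxX
  have hWX : W ≤ X / t₂ := by
    rw [le_div_iff₀ ht₂, mul_comm]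
    exact le_max_right _ _
  have hup := sub_le_mul_log_sub (c := c) (div_pos hx₀ ht₂)
    (div_le_div_of_nonneg_left hx₀.le ht₁ h12.le)
    (fun u hu => hφ' u ((div_pos hx₀ ht₂).trans_le hu.1))
    fun u hu => hψ ((div_pos hx₀ ht₂).trans_le hu.1) (div_pos hx₀ ht₁) hu.2
  have hlow := mul_log_sub_le_sub (c := c + 1) (div_pos hX ht₂)
    (div_le_div_of_nonneg_left hX.le ht₁ h12.le)
    (fun u hu => hφ' u ((div_pos hX ht₂).trans_le hu.1))
    fun u hu => hW u (hWX.trans hu.1)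
  have hlog {y : ℝ} (hy : 0 < y) : log (y / t₁) - log (y / t₂) = log t₂ - log t₁ := by
    rw [log_div hy.ne' ht₁.ne', log_div hy.ne' ht₂.ne']
    ring
  rw [hlog hx₀] at hup
  rw [hlog hX] at hlow
  have hL : 0 < log t₂ - log t₁ := sub_pos.2 (log_lt_log ht₁ h12)
  exact ⟨X, hxX, by nlinarith⟩

end potential

noncomputable def Φ (q r : ℝ) (φ : ℝ → ℝ) (t : ℝ) : ℝ :=
  ∫ x in Ioi 0, x ^ r * exp (-φ (x / t)) * afun q x

section Φ

variable {q r : ℝ} {φ : ℝ → ℝ} {t₁ t₂ : ℝ}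

lemma continuousOn_Φ_integrand (hq : 1 ≤ q) (hφc : ContinuousOn φ (Ici 0)) {t : ℝ} (ht : 0 ≤ t) :
    ContinuousOn (fun x => x ^ r * exp (-φ (x / t)) * afun q x) (Ioi 0) :=
  ((continuousOn_id.rpow_const fun _ hx => Or.inl (ne_of_gt hx)).mul
    (hφc.comp (continuousOn_id.div_const t) fun _ hx => div_nonneg (le_of_lt hx) ht).neg.rexp).mul
    (continuous_afun hq).continuousOn

lemma norm_Φ_integrand_le (hq : 1 ≤ q) (hφnn : ∀ w ∈ Ici (0 : ℝ), 0 ≤ φ w) {t x : ℝ}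
    (ht : 0 ≤ t) (hx : 0 < x) :
    ‖x ^ r * exp (-φ (x / t)) * afun q x‖ ≤ x ^ r * exp (-x) := by
  have hxr := rpow_nonneg hx.le r
  rw [norm_mul, norm_mul, norm_of_nonneg hxr, norm_of_nonneg (exp_pos _).le, norm_eq_abs]
  calc x ^ r * exp (-φ (x / t)) * |afun q x| ≤ x ^ r * 1 * exp (-x) := by
        gcongr
        · exact exp_le_one_iff.2 (neg_nonpos.2 (hφnn _ (div_nonneg hx.le ht)))
        · exact abs_afun_le hq x
    _ = x ^ r * exp (-x) := by ring

lemma integrableOn_Φ_integrand (hq : 1 ≤ q) (hr : -1 < r) (hφc : ContinuousOn φ (Ici 0))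
    (hφnn : ∀ w ∈ Ici (0 : ℝ), 0 ≤ φ w) {t : ℝ} (ht : 0 ≤ t) :
    IntegrableOn (fun x => x ^ r * exp (-φ (x / t)) * afun q x) (Ioi 0) :=
  integrableOn_Ioi_of_norm_le_rpow_mul_exp_neg hr (continuousOn_Φ_integrand hq hφc ht)
    fun _ hx => norm_Φ_integrand_le hq hφnn ht hx

lemma continuousOn_Φ_inv (hq : 1 ≤ q) (hr : -1 < r) (hφc : ContinuousOn φ (Ici 0))
    (hφnn : ∀ w ∈ Ici (0 : ℝ), 0 ≤ φ w) :
    ContinuousOn (fun s => Φ q r φ s⁻¹) (Ici 0) := by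
  refine continuousOn_of_dominated (bound := fun x => x ^ r * exp (-x))
    (fun s hs => (continuousOn_Φ_integrand hq hφc (inv_nonneg.2 hs)).aestronglyMeasurable
      measurableSet_Ioi)
    (fun s hs => (ae_restrict_iff' measurableSet_Ioi).mpr
      (.of_forall fun x hx => norm_Φ_integrand_le hq hφnn (inv_nonneg.2 hs) hx))
    (integrableOn_rpow_mul_exp_neg hr)
    ((ae_restrict_iff' measurableSet_Ioi).mpr (.of_forall fun x hx => ?_))
  simp only [div_inv_eq_mul]
  exact (continuousOn_const.mul (hφc.comp (continuous_const_mul x).continuousOn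
    fun s hs => mem_Ici.2 (mul_nonneg (le_of_lt hx) (mem_Ici.1 hs))).neg.rexp).mul
    continuousOn_const

lemma continuousOn_Φ (hq : 1 ≤ q) (hr : -1 < r) (hφc : ContinuousOn φ (Ici 0))
    (hφnn : ∀ w ∈ Ici (0 : ℝ), 0 ≤ φ w) :
    ContinuousOn (Φ q r φ) (Ioi 0) := by
  have hinv : ContinuousOn (fun t : ℝ => t⁻¹) (Ioi 0) :=
    continuousOn_inv₀.mono fun _ ht => ne_of_gt ht
  simpa only [Function.comp_def, inv_inv] using (continuousOn_Φ_inv hq hr hφc hφnn).comp hinv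
    fun t ht => mem_Ici.2 (inv_nonneg.2 (mem_Ioi.1 ht).le)

lemma tendsto_Φ_atTop (hq : 1 ≤ q) (hr : -1 < r) (hφc : ContinuousOn φ (Ici 0))
    (hφnn : ∀ w ∈ Ici (0 : ℝ), 0 ≤ φ w) :
    Tendsto (Φ q r φ) atTop (𝓝 (exp (-φ 0) * ∫ x in Ioi 0, x ^ r * afun q x)) := by
  -- `x / 0 = 0`, so `Φ q r φ 0` is already the limiting integral.
  have hΦ0 : Φ q r φ 0⁻¹ = exp (-φ 0) * ∫ x in Ioi 0, x ^ r * afun q x := by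
    simp only [Φ, inv_zero, div_zero, ← integral_const_mul]
    congr 1 with x
    ring
  have hlim := ((continuousOn_Φ_inv hq hr hφc hφnn) 0 self_mem_Ici).tendsto.comp
    (tendsto_inv_atTop_nhdsGT_zero.mono_right (nhdsWithin_mono _ Ioi_subset_Ici_self))
  simpa only [Function.comp_def, inv_inv, hΦ0] using hlim

lemma continuousOn_integral_mul_afun_mul {ρ : ℝ → ℝ} (hq : 1 ≤ q) (hρ : IntegrableOn ρ (Ioi 0)) :
    ContinuousOn (fun s => ∫ w in Ioi 0, ρ w * afun q (s * w)) (Ici 0) := by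
  refine continuousOn_of_dominated (bound := fun w => ‖ρ w‖)
    (fun s _ => hρ.aestronglyMeasurable.mul
      ((continuous_afun hq).comp (continuous_const_mul s)).aestronglyMeasurable)
    (fun s hs => (ae_restrict_iff' measurableSet_Ioi).mpr (.of_forall fun w hw => ?_))
    hρ.norm (.of_forall fun w =>
      (continuous_const.mul ((continuous_afun hq).comp (continuous_mul_const w))).continuousOn)
  rw [norm_mul]
  refine mul_le_of_le_one_right (norm_nonneg _) ((abs_afun_le hq _).trans ?_)
  exact exp_le_one_iff.2 (neg_nonpos.2 (mul_nonneg (mem_Ici.1 hs) (le_of_lt hw)))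

lemma Φ_eq_rpow_mul_integral {t : ℝ} (ht : 0 < t) :
    Φ q r φ t = t ^ (r + 1) * ∫ w in Ioi 0, w ^ r * exp (-φ w) * afun q (t * w) := by
  have hscale := integral_comp_mul_left_Ioi (fun x => x ^ r * exp (-φ (x / t)) * afun q x) 0 ht
  rw [mul_zero, smul_eq_mul, eq_inv_mul_iff_mul_eq₀ ht.ne'] at hscale
  rw [Φ, ← hscale, rpow_add_one ht.ne', mul_comm (t ^ r) t, mul_assoc]
  congr 1
  rw [← integral_const_mul]
  refine setIntegral_congr_fun measurableSet_Ioi fun w hw => ?_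
  rw [mul_div_cancel_left₀ w ht.ne', mul_rpow ht.le (mem_Ioi.1 hw).le]
  ring

lemma exists_Φ_pos (hq : 2 < q) (hr : -1 < r) (hφnn : ∀ w ∈ Ici (0 : ℝ), 0 ≤ φ w)
    (hφd : DifferentiableOn ℝ φ (Ioi 0)) (hψ : Tendsto (fun w => w * deriv φ w) atTop atTop) :
    ∃ t, 0 < t ∧ 0 < Φ q r φ t := by
  have hρ := integrableOn_rpow_mul_exp_neg_of_tendsto hr
    (fun w hw => hφnn w (mem_Ici.2 (mem_Ioi.1 hw).le))
    (fun u hu => (hφd.differentiableAt (Ioi_mem_nhds hu)).hasDerivAt) hψ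
  have hK0 : 0 < ∫ w in Ioi 0, w ^ r * exp (-φ w) * afun q (0 * w) := by
    simp only [zero_mul, integral_mul_const]
    refine mul_pos (setIntegral_Ioi_pos hρ le_rfl (fun w hw => ?_) fun w hw => ?_) (afun_pos ?_)
    · exact (mul_pos (rpow_pos_of_pos hw r) (exp_pos _)).le
    · exact mul_pos (rpow_pos_of_pos hw r) (exp_pos _)
    · rw [exp_zero]
      linarith
  have hK := ((continuousOn_integral_mul_afun_mul (by linarith) hρ) 0 self_mem_Ici).eventually
    (lt_mem_nhds hK0)
  obtain ⟨t, hKt, ht⟩ :=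
    ((hK.filter_mono (nhdsWithin_mono _ Ioi_subset_Ici_self)).and self_mem_nhdsWithin).exists
  exact ⟨t, ht, Φ_eq_rpow_mul_integral ht ▸ mul_pos (rpow_pos_of_pos ht _) hKt⟩

lemma Φ_neg_of_Φ_nonpos (hq : 2 < q) (hr : -1 < r) (hφc : ContinuousOn φ (Ici 0))
    (hφnn : ∀ w ∈ Ici (0 : ℝ), 0 ≤ φ w) (hφd : DifferentiableOn ℝ φ (Ioi 0))
    (hψ : MonotoneOn (fun w => w * deriv φ w) (Ioi 0))
    (hψtop : Tendsto (fun w => w * deriv φ w) atTop atTop) (ht₁ : 0 < t₁) (h12 : t₁ < t₂)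
    (hΦ : Φ q r φ t₁ ≤ 0) :
    Φ q r φ t₂ < 0 := by
  have hq' : 1 ≤ q := by linarith
  set x₀ := log (q - 1)
  have hx₀ : 0 < x₀ := log_pos (by linarith)
  have hexp : exp x₀ = q - 1 := exp_log (by linarith)
  set h := fun x => φ (x / t₁) - φ (x / t₂)
  obtain ⟨X, hX, hhX⟩ := exists_sub_comp_div_lt hφd hψ hψtop ht₁ h12 hx₀
  have hfactor (x : ℝ) : x ^ r * exp (-φ (x / t₂)) * afun q x
      = exp (h x) * (x ^ r * exp (-φ (x / t₁)) * afun q x) := by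
    have hexp_h : exp (-φ (x / t₂)) = exp (h x) * exp (-φ (x / t₁)) := by
      rw [← exp_add]
      congr 1
      simp only [h]
      ring
    rw [hexp_h]
    ring
  have hint₁ := integrableOn_Φ_integrand hq' hr hφc hφnn ht₁.le
  have hint₂ := integrableOn_Φ_integrand hq' hr hφc hφnn (ht₁.trans h12).le
  simp only [hfactor] at hint₂
  calc Φ q r φ t₂ = ∫ x in Ioi 0, exp (h x) * (x ^ r * exp (-φ (x / t₁)) * afun q x) := by
        simp only [Φ, hfactor]
    _ < exp (h x₀) * Φ q r φ t₁ := by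
        refine integral_mul_lt_mul_integral hx₀ hX hint₁ hint₂
          (exp_monotone.comp_monotoneOn (monotoneOn_sub_comp_div hφd hψ ht₁ h12.le))
          (exp_lt_exp.2 hhX) (fun x hx => ?_) fun x hx => ?_
        · exact mul_nonneg (mul_nonneg (rpow_nonneg hx.1.le r) (exp_pos _).le)
            (afun_nonneg (hexp ▸ exp_le_exp.2 hx.2))
        · exact mul_neg_of_pos_of_neg (mul_pos (rpow_pos_of_pos (hx₀.trans hx) r) (exp_pos _))
            (afun_neg hq' (hexp ▸ exp_lt_exp.2 hx))
    _ ≤ 0 := mul_nonpos_of_nonneg_of_nonpos (exp_pos _).le hΦ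

end Φ

theorem unique_zero_crossing_fullline_general
    (q : ℝ) (hq : 2 < q) (r : ℝ) (hr : 2 < r)
    (φ : ℝ → ℝ) (hφC2 : ContDiffOn ℝ 2 φ (Ici 0))
    (hφnn : ∀ w ∈ Ici (0 : ℝ), 0 ≤ φ w)
    (hψmono : MonotoneOn (fun w => w * deriv φ w) (Ici 0))
    (hψtop : Tendsto (fun w => w * deriv φ w) atTop atTop) :
    ∃! t : ℝ, 0 < t ∧
      (∫ x in Ioi (0 : ℝ), x ^ r * Real.exp (-(φ (x / t))) * afun q x) = 0 := by
  have hq' : 1 ≤ q := by linarith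
  have hr' : -1 < r := by linarith
  have hφc : ContinuousOn φ (Ici 0) := hφC2.continuousOn
  have hφd : DifferentiableOn ℝ φ (Ioi 0) :=
    (hφC2.differentiableOn (by norm_num)).mono Ioi_subset_Ici_self
  have hψ := hψmono.mono Ioi_subset_Ici_self
  obtain ⟨a, ha, hΦa⟩ := exists_Φ_pos hq hr' hφnn hφd hψtop
  have hlim : exp (-φ 0) * ∫ x in Ioi 0, x ^ r * afun q x < 0 :=
    mul_neg_of_pos_of_neg (exp_pos _) (integral_rpow_mul_afun_neg hq' (by linarith))
  exact existsUnique_pos_eq_zero_of_crossing (continuousOn_Φ hq' hr' hφc hφnn) ha hΦa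
    ((tendsto_Φ_atTop hq' hr' hφc hφnn).eventually (eventually_lt_nhds hlim))
    fun t₁ t₂ ht₁ h12 => Φ_neg_of_Φ_nonpos hq hr' hφc hφnn hφd hψ hψtop ht₁ h12

/-- **Unique zero of `Φ`, case `b = 0`, `c = ∞`, `r > 2`.** -/
theorem unique_zero_crossing_fullline
    (q : ℝ) (hq : 2 < q) (r : ℝ) (hr : 2 < r)
    (φ : ℝ → ℝ) (hφC2 : ContDiffOn ℝ 2 φ (Ici 0))
    (hφnn : ∀ w ∈ Ici (0 : ℝ), 0 ≤ φ w)
    (hψnn : ∀ w ∈ Ici (0 : ℝ), 0 ≤ w * deriv φ w)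
    (hψmono : MonotoneOn (fun w => w * deriv φ w) (Ici 0))
    (hψtop : Tendsto (fun w => w * deriv φ w) atTop atTop) :
    ∃! t : ℝ, 0 < t ∧
      (∫ x in Ioi (0 : ℝ), x ^ r * Real.exp (-(φ (x / t))) * afun q x) = 0 :=
  unique_zero_crossing_fullline_general q hq r hr φ hφC2 hφnn hψmono hψtop
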